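/- Suppose n > 500, d₁, d₂ ∈ {0,…,9} with d₁ ≠ d₂ and d₁ > 0, and ℓ₁, ℓ₂ ≥ 1 satisfy P_n = (1/9)(d₁·10^{ℓ₁+ℓ₂} − (d₁ − d₂)·10^{ℓ₂} − d₂). Then |9·a·α^n − d₁·10^{ℓ₁+ℓ₂}| < 30·10^{ℓ₂}, and consequently |(9a/d₁)·α^n·10^{−ℓ₁−ℓ₂} − 1| < 30/10^{ℓ₁}. -/

import Mathlib

/-- The Padovan sequence: `P 0 = 0`, `P 1 = 1`, `P 2 = 1`, `P (n+3) = P (n+1) + P n`. -/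
def padovan : ℕ → ℕ
  | 0 => 0
  | 1 => 1
  | 2 => 1
  | n + 3 => padovan (n + 1) + padovan n

/-!
By the Binet formula `P n - a α ^ n = b β ^ n + conj (b β ^ n)`. The complex roots satisfy
`re β = -α / 2` and `|β| ^ 2 = α ^ 2 - 1 < 0.78`, and from the same two facts `|b| ≤ 1`; hence
`9 |P n - a α ^ n| ≤ 18 |β| ^ n < 1` once `n ≥ 30`. The repdigit equation then puts `9 a α ^ n`
within `1 + 9 · 10 ^ ℓ₂` of `d₁ · 10 ^ (ℓ₁ + ℓ₂)`, and dividing by `d₁ · 10 ^ (ℓ₁ + ℓ₂)` gives the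
second bound.
-/

open ComplexConjugate

section Field

variable {K : Type*} [Field K] {x y z : K}

theorem sq_add_mul_add_sq_eq_one_of_cubic (hx : x ^ 3 = x + 1) (hy : y ^ 3 = y + 1)
    (hxy : x ≠ y) : x ^ 2 + x * y + y ^ 2 = 1 := by
  have h : (x - y) * (x ^ 2 + x * y + y ^ 2 - 1) = 0 := by linear_combination hx - hy
  simpa [sub_eq_zero, hxy] using h

theorem add_add_eq_zero_of_cubic (hx : x ^ 3 = x + 1) (hy : y ^ 3 = y + 1) (hz : z ^ 3 = z + 1)
    (hxy : x ≠ y) (hxz : x ≠ z) (hyz : y ≠ z) : x + y + z = 0 := by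
  have h : (y - z) * (x + y + z) = 0 := by
    linear_combination sq_add_mul_add_sq_eq_one_of_cubic hx hy hxy -
      sq_add_mul_add_sq_eq_one_of_cubic hx hz hxz
  simpa [sub_eq_zero, hyz] using h

/-- The coefficient of `x ^ n` in the Binet formula, `y` and `z` being the other two roots. -/
def padovanCoeff (x y z : K) : K := (x + 1) / ((x - y) * (x - z))

theorem padovan_eq_binet (hx : x ^ 3 = x + 1) (hy : y ^ 3 = y + 1) (hz : z ^ 3 = z + 1)
    (hxy : x ≠ y) (hxz : x ≠ z) (hyz : y ≠ z) (n : ℕ) :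
    (padovan n : K) =
      padovanCoeff x y z * x ^ n + padovanCoeff y x z * y ^ n + padovanCoeff z x y * z ^ n := by
  have hxy' := sub_ne_zero.mpr hxy
  have hxz' := sub_ne_zero.mpr hxz
  have hyz' := sub_ne_zero.mpr hyz
  have hyx' := sub_ne_zero.mpr hxy.symm
  have hzx' := sub_ne_zero.mpr hxz.symm
  have hzy' := sub_ne_zero.mpr hyz.symm
  induction n using padovan.induct with
  | case1 => simp only [padovan, padovanCoeff]; field_simp; ring
  | case2 => simp only [padovan, padovanCoeff]; field_simp; ring
  | case3 =>
    obtain rfl : z = -x - y := by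
      linear_combination add_add_eq_zero_of_cubic hx hy hz hxy hxz hyz
    simp only [padovan, padovanCoeff]
    field_simp
    ring
  | case4 n ih₁ ih₀ =>
    rw [show n.succ.succ.succ = n + 3 from rfl, padovan, Nat.cast_add, ih₁, ih₀]
    linear_combination (-(padovanCoeff x y z * x ^ n)) * hx - (padovanCoeff y x z * y ^ n) * hy -
      (padovanCoeff z x y * z ^ n) * hz

end Field

theorem padovan_real_root_bounds {α : ℝ} (hα : α ^ 3 = α + 1) : 1.3 < α ∧ α < 1.33 := by
  constructor
  · nlinarith [sq_nonneg (α - 1.3), sq_nonneg (α + 1.3), sq_nonneg α, sq_nonneg (α + 1)]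
  · nlinarith [sq_nonneg (α - 1.33), sq_nonneg (α + 1.33), sq_nonneg α, sq_nonneg (α + 1)]

section ComplexRoot

variable {α : ℝ} {β : ℂ}

theorem ofReal_ne_of_im_ne_zero (hβim : β.im ≠ 0) : (α : ℂ) ≠ β :=
  fun h => hβim (by rw [← h, Complex.ofReal_im])

theorem re_eq_and_im_sq_eq_of_cubic (hα : α ^ 3 = α + 1) (hβ : β ^ 3 = β + 1)
    (hβim : β.im ≠ 0) : β.re = -α / 2 ∧ β.im ^ 2 = 3 * α ^ 2 / 4 - 1 := by
  have hα' : (α : ℂ) ^ 3 = α + 1 := by exact_mod_cast congrArg ((↑) : ℝ → ℂ) hα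
  have h := sq_add_mul_add_sq_eq_one_of_cubic hα' hβ (ofReal_ne_of_im_ne_zero hβim)
  have hre := congrArg Complex.re h
  have him := congrArg Complex.im h
  simp only [Complex.add_re, Complex.add_im, Complex.mul_re, Complex.mul_im, sq,
    Complex.ofReal_re, Complex.ofReal_im, Complex.one_re, Complex.one_im] at hre him
  have hre_eq : β.re = -α / 2 := by
    have : (α + 2 * β.re) * β.im = 0 := by linear_combination him
    linear_combination (mul_eq_zero.mp this).resolve_right hβim / 2
  refine ⟨hre_eq, ?_⟩
  rw [hre_eq] at hre
  linear_combination -hre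

theorem norm_le_of_cubic (hα : α ^ 3 = α + 1) (hβ : β ^ 3 = β + 1) (hβim : β.im ≠ 0) :
    ‖β‖ ≤ 0.88 := by
  obtain ⟨hre, him⟩ := re_eq_and_im_sq_eq_of_cubic hα hβ hβim
  obtain ⟨hα₁, hα₂⟩ := padovan_real_root_bounds hα
  have hsq : ‖β‖ ^ 2 = α ^ 2 - 1 := by
    rw [Complex.sq_norm, Complex.normSq_apply, hre]
    linear_combination him
  nlinarith [norm_nonneg β]

theorem norm_padovanCoeff_le_one (hα : α ^ 3 = α + 1) (hβ : β ^ 3 = β + 1) (hβim : β.im ≠ 0) :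
    ‖padovanCoeff β α (conj β)‖ ≤ 1 := by
  obtain ⟨hre, him⟩ := re_eq_and_im_sq_eq_of_cubic hα hβ hβim
  obtain ⟨hα₁, hα₂⟩ := padovan_real_root_bounds hα
  have hnum : Complex.normSq (β + 1) = α ^ 2 - α := by
    simp only [Complex.normSq_apply, Complex.add_re, Complex.add_im, Complex.one_re,
      Complex.one_im, hre]
    linear_combination him
  have hden₁ : Complex.normSq (β - α) = 3 * α ^ 2 - 1 := by
    simp only [Complex.normSq_apply, Complex.sub_re, Complex.sub_im, Complex.ofReal_re,
      Complex.ofReal_im, hre]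
    linear_combination him
  have hden₂ : Complex.normSq (β - conj β) = 3 * α ^ 2 - 4 := by
    simp only [Complex.normSq_apply, Complex.sub_re, Complex.sub_im, Complex.conj_re,
      Complex.conj_im, hre]
    linear_combination 4 * him
  have hsq : ‖padovanCoeff β α (conj β)‖ ^ 2 ≤ 1 := by
    rw [Complex.sq_norm, padovanCoeff, map_div₀, map_mul, hnum, hden₁, hden₂,
      div_le_one (by nlinarith)]
    nlinarith
  nlinarith [norm_nonneg (padovanCoeff β α (conj β))]

theorem abs_padovan_sub_le {a : ℝ} (hα : α ^ 3 = α + 1) (hβ : β ^ 3 = β + 1)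
    (hβim : β.im ≠ 0) (ha : (a : ℂ) = padovanCoeff (α : ℂ) β (conj β)) (n : ℕ) :
    |(padovan n : ℝ) - a * α ^ n| ≤ 2 * ‖β‖ ^ n := by
  have hα' : (α : ℂ) ^ 3 = α + 1 := by exact_mod_cast congrArg ((↑) : ℝ → ℂ) hα
  have hβ' : conj β ^ 3 = conj β + 1 := by rw [← map_pow, hβ, map_add, map_one]
  have hαβ := ofReal_ne_of_im_ne_zero (α := α) hβim
  have hαβ' : (α : ℂ) ≠ conj β := ofReal_ne_of_im_ne_zero (by simpa using hβim)
  have hββ' : β ≠ conj β := fun h => hβim (Complex.conj_eq_iff_im.mp h.symm)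
  set b := padovanCoeff β α (conj β)
  have hconj : padovanCoeff (conj β) α β = conj b := by
    simp only [b, padovanCoeff, map_div₀, map_mul, map_sub, map_add, map_one,
      Complex.conj_ofReal, Complex.conj_conj]
  have herr : (((padovan n : ℝ) - a * α ^ n : ℝ) : ℂ) = b * β ^ n + conj (b * β ^ n) := by
    push_cast
    rw [padovan_eq_binet hα' hβ hβ' hαβ hαβ' hββ', ← ha, hconj, map_mul, map_pow]
    ring
  calc |(padovan n : ℝ) - a * α ^ n|
      = ‖b * β ^ n + conj (b * β ^ n)‖ := by rw [← herr, Complex.norm_real, Real.norm_eq_abs]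
    _ ≤ ‖b * β ^ n‖ + ‖conj (b * β ^ n)‖ := norm_add_le _ _
    _ = 2 * (‖b‖ * ‖β‖ ^ n) := by rw [Complex.norm_conj, norm_mul, norm_pow]; ring
    _ ≤ 2 * ‖β‖ ^ n := by
      gcongr
      exact mul_le_of_le_one_left (by positivity) (norm_padovanCoeff_le_one hα hβ hβim)

end ComplexRoot

theorem abs_sub_lt_of_repdigit {d₁ d₂ : ℕ} {x T E : ℝ} (hd₁ : d₁ ≤ 9) (hd₂ : d₂ ≤ 9)
    (hE : 1 ≤ E) (hx : |(d₁ * T - (d₁ - d₂) * E - d₂ : ℝ) - x| < 1) : |x - d₁ * T| < 10 * E := by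
  have hd₁' : (d₁ : ℝ) ≤ 9 := by exact_mod_cast hd₁
  have hd₂' : (d₂ : ℝ) ≤ 9 := by exact_mod_cast hd₂
  have hd₁₀ : (0 : ℝ) ≤ d₁ := d₁.cast_nonneg
  have hd₂₀ : (0 : ℝ) ≤ d₂ := d₂.cast_nonneg
  rw [abs_lt] at hx ⊢
  constructor <;> nlinarith

theorem abs_div_mul_zpow_sub_one_lt {x d B C : ℝ} {k l : ℕ} (hd : 1 ≤ d) (hB : 0 < B)
    (h : |x - d * B ^ (k + l)| < C * B ^ l) : |x / d * B ^ (-(k : ℤ) - l) - 1| < C / B ^ k := by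
  have hpos : 0 < d * B ^ (k + l) := by positivity
  have hzpow : B ^ (-(k : ℤ) - l) = (B ^ (k + l))⁻¹ := by
    rw [← zpow_natCast, ← zpow_neg]; push_cast; ring_nf
  have hrel : x / d * B ^ (-(k : ℤ) - l) - 1 = (x - d * B ^ (k + l)) / (d * B ^ (k + l)) := by
    rw [hzpow]; field_simp
  rw [hrel, abs_div, abs_of_pos hpos, div_lt_div_iff₀ hpos (by positivity)]
  calc |x - d * B ^ (k + l)| * B ^ k < C * B ^ l * B ^ k := by gcongr
    _ = C * B ^ (k + l) := by ring
    _ ≤ C * (d * B ^ (k + l)) := by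
      have hC : 0 ≤ C := by
        have := (abs_nonneg _).trans_lt h
        exact nonneg_of_mul_nonneg_left this.le (by positivity)
      gcongr
      exact le_mul_of_one_le_left (by positivity) hd

theorem first_linear_form_bound_general
    (α a : ℝ) (hα : α ^ 3 = α + 1)
    (β γ : ℂ) (hβ : β ^ 3 = β + 1) (hβim : β.im ≠ 0) (hγ : γ = starRingEnd ℂ β)
    (ha : (a : ℂ) = ((α : ℂ) + 1) / (((α : ℂ) - β) * ((α : ℂ) - γ)))
    (n d₁ d₂ ℓ₁ ℓ₂ : ℕ) (hn : 500 < n)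
    (hd₁ : d₁ ≤ 9) (hd₂ : d₂ ≤ 9) (hd₁pos : 0 < d₁)
    (heq : (9 : ℤ) * (padovan n : ℤ) =
      (d₁ : ℤ) * 10 ^ (ℓ₁ + ℓ₂) - ((d₁ : ℤ) - (d₂ : ℤ)) * 10 ^ ℓ₂ - (d₂ : ℤ)) :
    |9 * a * α ^ n - (d₁ : ℝ) * 10 ^ (ℓ₁ + ℓ₂)| < 30 * 10 ^ ℓ₂ ∧
      |9 * a / (d₁ : ℝ) * α ^ n * (10 : ℝ) ^ (-(ℓ₁ : ℤ) - (ℓ₂ : ℤ)) - 1| <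
        30 / 10 ^ ℓ₁ := by
  subst hγ
  have hsmall : ‖β‖ ^ n ≤ 0.88 ^ 30 :=
    (pow_le_pow_left₀ (norm_nonneg β) (norm_le_of_cubic hα hβ hβim) n).trans
      (pow_le_pow_of_le_one (by norm_num) (by norm_num) (by omega))
  have hclose : |(9 * padovan n : ℝ) - 9 * a * α ^ n| < 1 := by
    rw [mul_assoc, ← mul_sub, abs_mul, abs_of_pos (by norm_num : (0 : ℝ) < 9)]
    have := abs_padovan_sub_le hα hβ hβim ha n
    have : (0.88 : ℝ) ^ 30 < 1 / 18 := by norm_num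
    linarith
  have heqR : (9 * padovan n : ℝ) = d₁ * 10 ^ (ℓ₁ + ℓ₂) - (d₁ - d₂) * 10 ^ ℓ₂ - d₂ := by
    exact_mod_cast heq
  have hlinear : |9 * a * α ^ n - d₁ * 10 ^ (ℓ₁ + ℓ₂)| < 30 * 10 ^ ℓ₂ := by
    have h10 : (1 : ℝ) ≤ 10 ^ ℓ₂ := one_le_pow₀ (by norm_num)
    have := abs_sub_lt_of_repdigit hd₁ hd₂ h10 (heqR ▸ hclose)
    linarith
  refine ⟨hlinear, ?_⟩
  rw [div_mul_eq_mul_div]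
  exact abs_div_mul_zpow_sub_one_lt (by exact_mod_cast hd₁pos) (by norm_num) hlinear

/-- If `n > 500` and `P n = (1/9)(d₁·10^(ℓ₁+ℓ₂) − (d₁−d₂)·10^ℓ₂ − d₂)` with distinct
digits `d₁ ≠ d₂`, `d₁ > 0`, `ℓ₁, ℓ₂ ≥ 1`, then
`|9·a·α^n − d₁·10^(ℓ₁+ℓ₂)| < 30·10^ℓ₂` and
`|(9a/d₁)·α^n·10^(−ℓ₁−ℓ₂) − 1| < 30/10^ℓ₁`. -/
theorem first_linear_form_bound
    (α a : ℝ) (hα : α ^ 3 = α + 1)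
    (β γ : ℂ) (hβ : β ^ 3 = β + 1) (hβim : β.im ≠ 0) (hγ : γ = starRingEnd ℂ β)
    (ha : (a : ℂ) = ((α : ℂ) + 1) / (((α : ℂ) - β) * ((α : ℂ) - γ)))
    (n d₁ d₂ ℓ₁ ℓ₂ : ℕ) (hn : 500 < n)
    (hd₁ : d₁ ≤ 9) (hd₂ : d₂ ≤ 9) (hne : d₁ ≠ d₂) (hd₁pos : 0 < d₁)
    (hℓ₁ : 1 ≤ ℓ₁) (hℓ₂ : 1 ≤ ℓ₂)
    (heq : (9 : ℤ) * (padovan n : ℤ) =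
      (d₁ : ℤ) * 10 ^ (ℓ₁ + ℓ₂) - ((d₁ : ℤ) - (d₂ : ℤ)) * 10 ^ ℓ₂ - (d₂ : ℤ)) :
    |9 * a * α ^ n - (d₁ : ℝ) * 10 ^ (ℓ₁ + ℓ₂)| < 30 * 10 ^ ℓ₂ ∧
      |9 * a / (d₁ : ℝ) * α ^ n * (10 : ℝ) ^ (-(ℓ₁ : ℤ) - (ℓ₂ : ℤ)) - 1| <
        30 / 10 ^ ℓ₁ :=
  first_linear_form_bound_general α a hα β γ hβ hβim hγ ha n d₁ d₂ ℓ₁ ℓ₂ hn hd₁ hd₂ hd₁pos heq
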